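/- arXiv:2501.08802 — 2 statements merged into one kernel-verified Lean document; each statement's English description precedes it below -/
import Mathlib

section
/- In a gradual mechanism, for every pure strategy profile (s_i, s_{-i}) there exists a type θ_i of agent i and an unconditional strategy s_{θ_i} for θ_i such that (s_i, s_{-i}) and (s_{θ_i}, s_{-i}) induce the same terminal history, hence the same outcome. -/
/-! Gradual mechanisms (Chen–Wang): a finite dynamic game form with perfect recall
in which actions are non-empty subsets of types, available actions at a decision
node partition the agent's last report, and terminal outcomes are determined by
the accrued information. -/

universe u v

/-- A gradual mechanism over agents `N` with type spaces `Θ i`. -/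
structure GM (N : Type) (Θ : N → Type) : Type 1 where
  /-- histories -/
  Hist : Type
  root : Hist
  parent : Hist → Option Hist
  parent_root : parent root = none
  terminal : Hist → Prop
  /-- `report h i` is agent `i`'s last action (report) at `h`; `Θ i` at the root. -/
  report : Hist → ∀ i, Set (Θ i)
  report_root : ∀ i, report root i = Set.univ
  report_nonempty : ∀ h i, (report h i).Nonempty
  /-- active agents at a history -/
  active : Hist → N → Prop
  /-- available actions of agent `i` at history `h` -/
  avail : (h : Hist) → (i : N) → Set (Set (Θ i))
  avail_nonempty : ∀ h i a, a ∈ avail h i → a.Nonempty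
  avail_disjoint : ∀ h i a a', a ∈ avail h i → a' ∈ avail h i → a ≠ a' → a ∩ a' = ∅
  avail_cover : ∀ h i, active h i → ⋃₀ avail h i = report h i
  /-- transition: the immediate successor of `h` given an action profile -/
  child : (h : Hist) → ((i : N) → Set (Θ i)) → Option Hist
  child_parent : ∀ h a h', child h a = some h' → parent h' = some h
  child_report_active : ∀ h a h', child h a = some h' → ∀ i, active h i → report h' i = a i
  child_report_inactive : ∀ h a h', child h a = some h' → ∀ i, ¬ active h i → report h' i = report h i
  child_exists : ∀ h, ¬ terminal h → ∀ a : (i : N) → Set (Θ i),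
      (∀ i, active h i → a i ∈ avail h i) → ∃ h', child h a = some h'
  /-- information: `info i h h'` iff `h` and `h'` are in the same information set of `i`. -/
  info : N → Hist → Hist → Prop
  info_equiv : ∀ i, Equivalence (info i)
  info_active : ∀ i h h', info i h h' → active h i → active h' i
  info_avail : ∀ i h h', info i h h' → avail h i = avail h' i
  info_report : ∀ i h h', info i h h' → report h i = report h' i

namespace GM

variable {N : Type} {Θ : N → Type} {X : Type}

/-- Strict precedence of histories. -/
def Prec (G : GM N Θ) : G.Hist → G.Hist → Prop :=
  Relation.TransGen (fun h h' => G.parent h' = some h)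

/-- Weak precedence of histories. -/
def PrecEq (G : GM N Θ) : G.Hist → G.Hist → Prop :=
  Relation.ReflTransGen (fun h h' => G.parent h' = some h)

/-- The set of type profiles consistent with a history (the accrued information `Θ(h)`). -/
def TypeAt (G : GM N Θ) (h : G.Hist) : Set (∀ i, Θ i) :=
  {θ | ∀ i, θ i ∈ G.report h i}

/-- `Θ_{-i}`-information accrued at histories in a set `C`. -/
def minusTypes (G : GM N Θ) (i : N) (C : Set G.Hist) : Set (∀ j, Θ j) :=
  {θ | ∃ h ∈ C, ∀ j, j ≠ i → θ j ∈ G.report h j}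

/-- Type profiles accrued at some history of `C`. -/
def classTypes (G : GM N Θ) (C : Set G.Hist) : Set (∀ j, Θ j) :=
  {θ | ∃ h ∈ C, ∀ j, θ j ∈ G.report h j}

/-- A valid (pure, interim) strategy of agent `i`. -/
def ValidStrategy (G : GM N Θ) (i : N) (s : G.Hist → Set (Θ i)) : Prop :=
  (∀ h, G.active h i → s h ∈ G.avail h i) ∧ ∀ h h', G.info i h h' → s h = s h'

/-- A valid strategy profile. -/
def ValidProfile (G : GM N Θ) (s : ∀ i, G.Hist → Set (Θ i)) : Prop :=
  ∀ i, G.ValidStrategy i (s i)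

/-- The histories reached along the play path of a strategy profile. -/
inductive Reaches (G : GM N Θ) (s : ∀ i, G.Hist → Set (Θ i)) : G.Hist → Prop
  | root : Reaches G s G.root
  | step {h h'} : Reaches G s h → ¬ G.terminal h →
      G.child h (fun i => s i h) = some h' → Reaches G s h'

/-- A strategy of `i` is unconditional for type `θi` if it always selects the
action containing `θi` whenever `θi` is consistent with `i`'s previous report. -/
def Uncond (G : GM N Θ) (i : N) (θi : Θ i) (s : G.Hist → Set (Θ i)) : Prop :=
  G.ValidStrategy i s ∧ ∀ h, G.active h i → θi ∈ G.report h i → θi ∈ s h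

/-- `G` implements the SCF `f`: outcomes at terminal histories are assigned
according to the accrued information. -/
def Implements (G : GM N Θ) (f : (∀ i, Θ i) → X) : Prop :=
  ∀ z, G.terminal z → ∀ θ ∈ G.TypeAt z, ∀ θ' ∈ G.TypeAt z, f θ = f θ'

/-- Incentive compatibility: truth-telling (unconditional strategies) is weakly
dominant for every agent. -/
def IC [DecidableEq N] (G : GM N Θ) (f : (∀ i, Θ i) → X)
    (R : ∀ i, Θ i → X → X → Prop) : Prop :=
  ∀ i (θi : Θ i) (u : G.Hist → Set (Θ i)) (s : ∀ j, G.Hist → Set (Θ j)),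
    G.Uncond i θi u → G.ValidProfile s →
    ∀ z z', G.terminal z → G.Reaches (Function.update s i u) z →
      G.terminal z' → G.Reaches s z' →
      ∀ θ θ', θ ∈ G.TypeAt z → θ' ∈ G.TypeAt z' → R i θi (f θ) (f θ')

/-- Information sets (as sets of histories) of agent `i`. -/
def InfoClass (G : GM N Θ) (i : N) (C : Set G.Hist) : Prop :=
  ∃ h, G.active h i ∧ C = {h' | G.info i h h'}

/-- Precedence between information sets of `i`. -/
def ClassPrec (G : GM N Θ) (C C' : Set G.Hist) : Prop :=
  ∃ h ∈ C, ∃ h' ∈ C', G.Prec h h'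

/-- `C'` is an immediate successor information set of `C` (for agent `i`). -/
def ClassImmSucc (G : GM N Θ) (i : N) (C C' : Set G.Hist) : Prop :=
  G.ClassPrec C C' ∧
    ∀ D, G.InfoClass i D → D ≠ C → D ≠ C' → ¬ (G.ClassPrec C D ∧ G.ClassPrec D C')

/-- A history `h` is consistent with the partial strategy profile `s` of the
agents in `M` if some completion of `s` reaches `h`. -/
def HConsistent (G : GM N Θ) (M : Set N) (s : ∀ j, G.Hist → Set (Θ j))
    (h : G.Hist) : Prop :=
  ∃ t, G.ValidProfile t ∧ (∀ j ∈ M, t j = s j) ∧ G.Reaches t h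

/-- A type profile `θ` is consistent with the partial strategy profile `s` of
the agents in `M`. -/
def TConsistent (G : GM N Θ) (M : Set N) (s : ∀ j, G.Hist → Set (Θ j))
    (θ : ∀ i, Θ i) : Prop :=
  ∃ t, G.ValidProfile t ∧ (∀ j ∈ M, t j = s j) ∧
    ∃ z, G.terminal z ∧ G.Reaches t z ∧ θ ∈ G.TypeAt z

end GM

/-- Strategy-proofness of a social choice function. -/
def StrategyProof {N : Type} [DecidableEq N] {Θ : N → Type} {X : Type}
    (f : (∀ i, Θ i) → X) (R : ∀ i, Θ i → X → X → Prop) : Prop :=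
  ∀ i (θ : ∀ j, Θ j) (θi' : Θ i), R i (θ i) (f θ) (f (Function.update θ i θi'))

/-! Take any type `θ` consistent with `i`'s report at the reached history `z`, and let `i`
play `s i` except that, wherever `θ` is still consistent and `i` moves, she reports the cell
containing `θ`. Along the play path to `z`, every report of `i` contains `θ`, so there the
new strategy coincides with `s i` and the play is unchanged. -/

namespace GM

variable {N : Type} {Θ : N → Type} (G : GM N Θ) {i : N}

theorem subset_report_of_mem_avail {h : G.Hist} {a : Set (Θ i)} (ha : G.active h i)
    (haA : a ∈ G.avail h i) : a ⊆ G.report h i :=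
  G.avail_cover h i ha ▸ Set.subset_sUnion_of_mem haA

theorem exists_mem_avail_of_mem_report {h : G.Hist} {θ : Θ i} (ha : G.active h i)
    (hθ : θ ∈ G.report h i) : ∃ a ∈ G.avail h i, θ ∈ a := by
  rw [← G.avail_cover h i ha] at hθ
  exact hθ

theorem eq_of_mem_avail {h : G.Hist} {θ : Θ i} {a a' : Set (Θ i)} (ha : a ∈ G.avail h i)
    (ha' : a' ∈ G.avail h i) (hθa : θ ∈ a) (hθa' : θ ∈ a') : a = a' := by
  by_contra hne
  exact (G.avail_disjoint h i a a' ha ha' hne).subset ⟨hθa, hθa'⟩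

theorem mem_report_of_child {h h' : G.Hist} {a : ∀ j, Set (Θ j)} {θ : Θ i}
    (hav : G.active h i → a i ∈ G.avail h i) (hchild : G.child h a = some h')
    (hθ : θ ∈ G.report h' i) : θ ∈ G.report h i ∧ (G.active h i → θ ∈ a i) := by
  by_cases hact : G.active h i
  · rw [G.child_report_active h a h' hchild i hact] at hθ
    exact ⟨G.subset_report_of_mem_avail hact (hav hact) hθ, fun _ => hθ⟩
  · rw [G.child_report_inactive h a h' hchild i hact] at hθ
    exact ⟨hθ, (absurd · hact)⟩

/-- Taking the family of available actions rather than a history as argument makes the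
reported cell constant on information sets. -/
noncomputable def cell {α : Type*} (A : Set (Set α)) (x : α) : Set α :=
  Classical.epsilon fun a => a ∈ A ∧ x ∈ a

theorem cell_eq {h : G.Hist} {θ : Θ i} {a : Set (Θ i)} (ha : a ∈ G.avail h i) (hθ : θ ∈ a) :
    cell (G.avail h i) θ = a :=
  have hcell := Classical.epsilon_spec (p := fun a => a ∈ G.avail h i ∧ θ ∈ a) ⟨a, ha, hθ⟩
  G.eq_of_mem_avail hcell.1 ha hcell.2 hθ

theorem cell_mem_avail {h : G.Hist} {θ : Θ i} (ha : G.active h i) (hθ : θ ∈ G.report h i) :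
    cell (G.avail h i) θ ∈ G.avail h i ∧ θ ∈ cell (G.avail h i) θ := by
  obtain ⟨a, haA, hθa⟩ := G.exists_mem_avail_of_mem_report ha hθ
  rw [G.cell_eq haA hθa]
  exact ⟨haA, hθa⟩

open Classical in
noncomputable def truthful (θ : Θ i) (s : G.Hist → Set (Θ i)) (h : G.Hist) : Set (Θ i) :=
  if G.active h i ∧ θ ∈ G.report h i then cell (G.avail h i) θ else s h

variable {G}

theorem truthful_eq_self {s : G.Hist → Set (Θ i)} (hs : G.ValidStrategy i s) {θ : Θ i}
    {h : G.Hist} (hθ : G.active h i → θ ∈ s h) : G.truthful θ s h = s h := by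
  unfold truthful
  split_ifs with hc
  · exact G.cell_eq (hs.1 h hc.1) (hθ hc.1)
  · rfl

theorem uncond_truthful {s : G.Hist → Set (Θ i)} (hs : G.ValidStrategy i s) (θ : Θ i) :
    G.Uncond i θ (G.truthful θ s) := by
  refine ⟨⟨fun h ha => ?_, fun h h' hinfo => ?_⟩, fun h ha hθ => ?_⟩
  · unfold truthful
    split_ifs with hc
    · exact (G.cell_mem_avail ha hc.2).1
    · exact hs.1 h ha
  · have hact : G.active h i ↔ G.active h' i :=
      ⟨G.info_active i h h' hinfo, G.info_active i h' h ((G.info_equiv i).symm hinfo)⟩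
    unfold truthful
    rw [G.info_report i h h' hinfo, G.info_avail i h h' hinfo, hs.2 h h' hinfo, hact]
  · simpa [truthful, ha, hθ] using (G.cell_mem_avail ha hθ).2

theorem Reaches.update_of_mem_report [DecidableEq N] {s : ∀ j, G.Hist → Set (Θ j)}
    (hs : G.ValidStrategy i (s i)) {u : G.Hist → Set (Θ i)} {θ : Θ i}
    (hu : ∀ h, (G.active h i → θ ∈ s i h) → u h = s i h) {w : G.Hist}
    (hw : G.Reaches s w) (hθ : θ ∈ G.report w i) : G.Reaches (Function.update s i u) w := by
  induction hw with
  | root => exact .root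
  | @step h h' _ hterm hchild ih =>
    obtain ⟨hθh, hθs⟩ := G.mem_report_of_child (hs.1 h) hchild hθ
    have hagree : (fun j => Function.update s i u j h) = fun j => s j h := by
      funext j
      rcases eq_or_ne j i with rfl | hj
      · simpa using hu h hθs
      · simp [hj]
    exact .step (ih hθh) hterm (hagree ▸ hchild)

end GM

theorem exists_unconditional_same_terminal_general {N : Type} [DecidableEq N]
    {Θ : N → Type} (G : GM N Θ) (s : ∀ j, G.Hist → Set (Θ j))
    (hs : G.ValidProfile s) (i : N) (z : G.Hist)
    (hreach : G.Reaches s z) :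
    ∃ (θi : Θ i) (u : G.Hist → Set (Θ i)),
      G.Uncond i θi u ∧ G.Reaches (Function.update s i u) z := by
  obtain ⟨θi, hθi⟩ := G.report_nonempty z i
  exact ⟨θi, G.truthful θi (s i), GM.uncond_truthful (hs i) θi,
    hreach.update_of_mem_report (hs i) (fun _ => GM.truthful_eq_self (hs i)) hθi⟩

/-- In a gradual mechanism, for every pure strategy profile `(s_i, s_{-i})`
there exist a type `θi` of agent `i` and an unconditional strategy `u` for
`θi` such that `(u, s_{-i})` induces the same terminal history as
`(s_i, s_{-i})` — hence the same outcome. -/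
theorem exists_unconditional_same_terminal {N : Type} [DecidableEq N]
    {Θ : N → Type} (G : GM N Θ) (s : ∀ j, G.Hist → Set (Θ j))
    (hs : G.ValidProfile s) (i : N) (z : G.Hist)
    (hz : G.terminal z) (hreach : G.Reaches s z) :
    ∃ (θi : Θ i) (u : G.Hist → Set (Θ i)),
      G.Uncond i θi u ∧ G.Reaches (Function.update s i u) z :=
  exists_unconditional_same_terminal_general G s hs i z hreach
end

section
/- If a gradual mechanism G has no splitting opportunity and G' is obtained from G by a coalescing transformation or an inverse illuminating transformation, then G' has no splitting opportunity. -/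
/-! Gradual mechanisms (Chen–Wang): a finite dynamic game form with perfect recall
in which actions are non-empty subsets of types, available actions at a decision
node partition the agent's last report, and terminal outcomes are determined by
the accrued information. -/

universe u v

/-- A coalescing (COA) transformation turning `G1` into `G2`: the information
set `Cbar` of agent `i` is the unique immediate successor of her information
set `C` following the action `a`, and `i` acquires no new information at `Cbar`
(`Θ_{-i}(C) = Θ_{-i}(Cbar)`); the transformation shifts the actions available
at `Cbar` up to `C`, replacing `a` and deleting `Cbar`.  The correspondence is
recorded, as in the paper, by outcome-preserving bijections between terminal
histories and between information sets. -/
structure COA {N : Type} {Θ : N → Type} (G1 G2 : GM N Θ) where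
  i : N
  C : Set G1.Hist
  Cbar : Set G1.Hist
  hC : G1.InfoClass i C
  hCbar : G1.InfoClass i Cbar
  hne : C ≠ Cbar
  a : Set (Θ i)
  ha : ∀ h ∈ C, a ∈ G1.avail h i
  /-- `Cbar` follows the action `a` at `C` -/
  hrep : ∀ h ∈ Cbar, G1.report h i = a
  himm : G1.ClassImmSucc i C Cbar
  /-- agent `i` acquires no further information at `Cbar` -/
  hnoinfo : G1.minusTypes i C = G1.minusTypes i Cbar
  /-- a bijection between terminal histories preserving accrued information
  (hence outcomes) -/
  T : {z : G1.Hist // G1.terminal z} ≃ {z : G2.Hist // G2.terminal z}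
  hT : ∀ z, G1.TypeAt z.1 = G2.TypeAt (T z).1
  /-- for each agent `j ≠ i`, a bijection between information sets preserving
  accrued information and available actions -/
  Ij : ∀ j, j ≠ i →
      ({D : Set G1.Hist // G1.InfoClass j D} ≃ {D : Set G2.Hist // G2.InfoClass j D})
  hIj_types : ∀ j (hj : j ≠ i) D, G1.classTypes D.1 = G2.classTypes ((Ij j hj) D).1
  hIj_avail : ∀ j (hj : j ≠ i) D, ∀ h ∈ D.1, ∀ h' ∈ ((Ij j hj) D).1,
      G1.avail h j = G2.avail h' j
  /-- for agent `i`, a bijection between her information sets other than `Cbar`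
  and her information sets in `G2` -/
  Ii : {D : Set G1.Hist // G1.InfoClass i D ∧ D ≠ Cbar} ≃
      {D : Set G2.Hist // G2.InfoClass i D}
  hIi_types : ∀ D, G1.classTypes D.1 = G2.classTypes (Ii D).1
  hIi_avail_ne : ∀ D, D.1 ≠ C → ∀ h ∈ D.1, ∀ h' ∈ (Ii D).1,
      G1.avail h i = G2.avail h' i
  /-- at (the image of) `C`, the action `a` is replaced by the actions available
  at `Cbar` -/
  hIi_avail_C : ∀ (hD : G1.InfoClass i C ∧ C ≠ Cbar), ∀ h ∈ C, ∀ hbar ∈ Cbar,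
      ∀ h' ∈ (Ii ⟨C, hD⟩).1, G2.avail h' i = (G1.avail h i \ {a}) ∪ G1.avail hbar i

/-- A history weakly follows some history of the set `S`. -/
def GM.Touches {N : Type} {Θ : N → Type} (G : GM N Θ) (S : Set G.Hist)
    (h : G.Hist) : Prop :=
  h ∈ S ∨ ∃ g ∈ S, G.Prec g h

/-- An illuminating (ILL) transformation turning `G1` into `G2`: the
information set `C` of agent `i` in `G1` is partitioned into the two non-empty
information sets `C1` and `C2` (partitioning all successor information sets of
agent `i` accordingly, to preserve perfect recall); histories, other agents'
information sets, and outcomes are unchanged. -/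
structure ILL {N : Type} {Θ : N → Type} (G1 G2 : GM N Θ) where
  i : N
  /-- the identification of the (unchanged) histories -/
  e : G2.Hist ≃ G1.Hist
  e_root : e G2.root = G1.root
  e_parent : ∀ h, Option.map e (G2.parent h) = G1.parent (e h)
  e_terminal : ∀ h, G2.terminal h ↔ G1.terminal (e h)
  e_report : ∀ h j, G2.report h j = G1.report (e h) j
  e_active : ∀ h j, G2.active h j ↔ G1.active (e h) j
  e_avail : ∀ h j, G2.avail h j = G1.avail (e h) j
  e_child : ∀ h a, Option.map e (G2.child h a) = G1.child (e h) a
  /-- other agents' information is unchanged -/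
  e_info_ne : ∀ j, j ≠ i → ∀ h h', (G2.info j h h' ↔ G1.info j (e h) (e h'))
  C : Set G1.Hist
  C1 : Set G1.Hist
  C2 : Set G1.Hist
  hC : G1.InfoClass i C
  hunion : C1 ∪ C2 = C
  hdisj : C1 ∩ C2 = ∅
  hne1 : C1.Nonempty
  hne2 : C2.Nonempty
  /-- agent `i`'s information is refined exactly by distinguishing whether the
  play passed through `C1` or through `C2` -/
  e_info_i : ∀ h h', G2.info i h h' ↔
      (G1.info i (e h) (e h') ∧ (G1.Touches C1 (e h) ↔ G1.Touches C1 (e h')))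


/-- `G` has no splitting opportunity iff the set of type profiles consistent
with each terminal history is a singleton. -/
def NoSPLOpp {N : Type} {Θ : N → Type} (G : GM N Θ) : Prop :=
  ∀ z, G.terminal z → ∀ θ ∈ G.TypeAt z, ∀ θ' ∈ G.TypeAt z, θ = θ'

theorem ILL.typeAt_e {N : Type} {Θ : N → Type} {G₁ G₂ : GM N Θ} (L : ILL G₁ G₂)
    (h : G₂.Hist) : G₁.TypeAt (L.e h) = G₂.TypeAt h := by
  ext θ
  simp only [GM.TypeAt, Set.mem_ofPred_eq, L.e_report]

namespace NoSPLOpp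

variable {N : Type} {Θ : N → Type} {G₁ G₂ : GM N Θ}

theorem of_typeAt_subset (h₁ : NoSPLOpp G₁)
    (hsub : ∀ z, G₂.terminal z → ∃ w, G₁.terminal w ∧ G₂.TypeAt z ⊆ G₁.TypeAt w) :
    NoSPLOpp G₂ := by
  intro z hz θ hθ θ' hθ'
  obtain ⟨w, hw, hzw⟩ := hsub z hz
  exact h₁ w hw θ (hzw hθ) θ' (hzw hθ')

theorem of_coa (c : COA G₁ G₂) (h₁ : NoSPLOpp G₁) : NoSPLOpp G₂ :=
  of_typeAt_subset h₁ fun z hz =>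
    let w := c.T.symm ⟨z, hz⟩
    ⟨w, w.2, by rw [c.hT w, c.T.apply_symm_apply]⟩

theorem of_ill (L : ILL G₁ G₂) (h₂ : NoSPLOpp G₂) : NoSPLOpp G₁ :=
  of_typeAt_subset h₂ fun z hz =>
    ⟨L.e.symm z, by rwa [L.e_terminal, L.e.apply_symm_apply],
      by rw [← L.typeAt_e, L.e.apply_symm_apply]⟩

end NoSPLOpp

/-- **Lemma 1.** If a gradual mechanism `G` has no splitting opportunity and
`G'` is obtained from `G` through a coalescing or an inverse illuminating
transformation, then `G'` has no splitting opportunity. -/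
theorem no_spl_preserved {N : Type} {Θ : N → Type} (G G' : GM N Θ)
    (hG : NoSPLOpp G) (hstep : Nonempty (COA G G') ∨ Nonempty (ILL G' G)) :
    NoSPLOpp G' := by
  rcases hstep with ⟨⟨c⟩⟩ | ⟨⟨L⟩⟩
  · exact NoSPLOpp.of_coa c hG
  · exact NoSPLOpp.of_ill L hG
end
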